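/- Let R be a supercommutative superring that is a Noetherian superring, a superdomain, and a unique factorization superring (UFSR). Then: (a) R is local with unique maximal ideal the canonical superideal 𝒥, i.e. for every x : R, IsUnit x ↔ x ∉ 𝒥; (b) R is an Artinian superring, i.e. every decreasing chain of homogeneous ideals of R is eventually constant; and (c) 𝒥 is the unique prime ideal of R: every two-sided ideal P of R with (1 : R) ∉ P and (∀ a b : R, a * b ∈ P → a ∈ P ∨ b ∈ P) equals 𝒥 (this expresses that the even Krull superdimension of R is 0). (Theorem 3.13 / thm:sartin of the paper.) -/

import Mathlib

/-! Basic notions for supercommutative superrings, following the paper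
"A note on unique factorization in superrings". -/

section Defs

variable {R : Type*} [Ring R]

/-- `a` divides `b`: `b = c * a * d` for some `c, d`. -/
def SDvd (a b : R) : Prop := ∃ c d : R, b = c * a * d

/-- `a` is associated to `b`: `a = u * b * v` for units `u, v`. -/
def SAssociated (a b : R) : Prop := ∃ u v : Rˣ, a = (u : R) * b * (v : R)

/-- `a` is normal: `aR = Ra` as sets. -/
def SNormal (a : R) : Prop :=
  {x : R | ∃ r : R, x = a * r} = {x : R | ∃ r : R, x = r * a}

/-- `a` is irreducible: a non-unit which is not a product of two non-units. -/
def SIrreducible (a : R) : Prop :=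
  ¬ IsUnit a ∧ ∀ b c : R, a = b * c → IsUnit b ∨ IsUnit c

/-- `R` is a unique factorization superring: every nonzero non-unit admits a
factorization into normal irreducible elements, uniquely up to order and associates. -/
def IsUFSR (R : Type*) [Ring R] : Prop :=
  (∀ x : R, x ≠ 0 → ¬ IsUnit x →
      ∃ (d : ℕ) (f : Fin d → R),
        (∀ i, SNormal (f i) ∧ SIrreducible (f i)) ∧ x = (List.ofFn f).prod) ∧
  (∀ x : R, x ≠ 0 → ¬ IsUnit x →
      ∀ (d n : ℕ) (f : Fin d → R) (g : Fin n → R),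
        (∀ i, SNormal (f i) ∧ SIrreducible (f i)) →
        (∀ i, SNormal (g i) ∧ SIrreducible (g i)) →
        x = (List.ofFn f).prod → x = (List.ofFn g).prod →
        ∃ h : d = n, ∃ σ : Equiv.Perm (Fin n),
          ∀ i : Fin n, SAssociated (f (Fin.cast h.symm i)) (g (σ i)))

end Defs

/-- The supercommutativity condition for a `ℤ₂`-grading `𝒜` on `R`. -/
def SuperComm {R : Type*} [Ring R] (𝒜 : ZMod 2 → AddSubgroup R) : Prop :=
  ∀ (i j : ZMod 2), ∀ x ∈ 𝒜 i, ∀ y ∈ 𝒜 j,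
    x * y = ((-1 : ℤ) ^ (i.val * j.val)) • (y * x)

/-- `2` is a non-zerodivisor in `R`. -/
def TwoRegular (R : Type*) [Ring R] : Prop := ∀ x : R, 2 * x = 0 → x = 0

/-- The canonical superideal `𝒥 = R·R₁`, the (two-sided, by supercommutativity)
ideal generated by the odd part. -/
def canonicalSuperideal {R : Type*} [Ring R] (𝒜 : ZMod 2 → AddSubgroup R) : Ideal R :=
  Ideal.span (𝒜 1 : Set R)

/-- `R` is a superdomain: `𝒥` is a proper completely prime ideal. -/
def IsSuperdomain {R : Type*} [Ring R] (𝒜 : ZMod 2 → AddSubgroup R) : Prop :=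
  (1 : R) ∉ canonicalSuperideal 𝒜 ∧
    ∀ a b : R, a * b ∈ canonicalSuperideal 𝒜 →
      a ∈ canonicalSuperideal 𝒜 ∨ b ∈ canonicalSuperideal 𝒜

/-- `R` is oddly-Noetherian: the odd part `𝒜 1` is finitely generated
over the even part `𝒜 0`. -/
def IsOddlyNoetherian {R : Type*} [Ring R] (𝒜 : ZMod 2 → AddSubgroup R) : Prop :=
  ∃ (n : ℕ) (z : Fin n → R), (∀ j, z j ∈ 𝒜 1) ∧
    ∀ x ∈ 𝒜 1, ∃ a : Fin n → R, (∀ j, a j ∈ 𝒜 0) ∧ x = ∑ j, a j * z j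

/-- The even subring `R₀` of `R`, with carrier `𝒜 0`. -/
def evenSubring {R : Type*} [Ring R] (𝒜 : ZMod 2 → AddSubgroup R) [GradedRing 𝒜] :
    Subring R where
  carrier := 𝒜 0
  mul_mem' := fun {a b} ha hb => by simpa using SetLike.mul_mem_graded ha hb
  one_mem' := SetLike.one_mem_graded 𝒜
  add_mem' := fun {a b} ha hb => (𝒜 0).add_mem ha hb
  zero_mem' := (𝒜 0).zero_mem
  neg_mem' := fun {a} ha => (𝒜 0).neg_mem ha

/-- The additive subgroup of `R` generated by all ordered products of `n`
elements of the set `S`. -/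
def prodPow {R : Type*} [Ring R] (S : Set R) (n : ℕ) : AddSubgroup R :=
  AddSubgroup.closure
    {x : R | ∃ f : Fin n → R, (∀ i, f i ∈ S) ∧ x = (List.ofFn f).prod}

/-- `R` is an Artinian superring: every decreasing sequence of homogeneous
two-sided ideals of `R` is eventually constant. -/
def IsArtinianSuperring {R : Type*} [Ring R]
    (𝒜 : ZMod 2 → AddSubgroup R) [GradedRing 𝒜] : Prop :=
  ∀ I : ℕ → Ideal R,
    (∀ n, ∀ x ∈ I n, ∀ r : R, x * r ∈ I n) →
    (∀ n, ∀ x ∈ I n, ∀ i : ZMod 2, (DirectSum.decompose 𝒜 x i : R) ∈ I n) →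
    (∀ n, I (n + 1) ≤ I n) →
    ∃ N : ℕ, ∀ m : ℕ, N ≤ m → I m = I N


set_option linter.unusedSectionVars false
set_option linter.unusedVariables false

section Part1
variable {R : Type*} [Ring R]

theorem snormal_left {f : R} (hfn : SNormal f) (r : R) : ∃ r', f * r = r' * f := by
  have : f * r ∈ {x : R | ∃ r : R, x = f * r} := ⟨r, rfl⟩
  rw [hfn] at this; exact this

theorem snormal_right {f : R} (hfn : SNormal f) (r : R) : ∃ r', r * f = f * r' := by
  have : r * f ∈ {x : R | ∃ r : R, x = r * f} := ⟨r, rfl⟩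
  rw [← hfn] at this; exact this

theorem prod_form {f : R} (hfn : SNormal f) :
    ∀ L : List R, (∀ x ∈ L, ∃ w, x = w * f) → ∃ W, L.prod = W * f ^ L.length := by
  intro L
  induction L with
  | nil => exact fun _ => ⟨1, by simp⟩
  | cons a t ih =>
    intro h
    obtain ⟨w, hw⟩ := h a List.mem_cons_self
    obtain ⟨Wt, hWt⟩ := ih (fun x hx => h x (List.mem_cons_of_mem a hx))
    obtain ⟨Wt', hWt'⟩ := snormal_left hfn Wt
    refine ⟨w * Wt', ?_⟩
    rw [List.prod_cons, hw, hWt, List.length_cons]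
    calc w * f * (Wt * f ^ t.length) = w * (f * Wt) * f ^ t.length := by
          rw [mul_assoc, mul_assoc, mul_assoc]
      _ = w * Wt' * (f * f ^ t.length) := by rw [hWt', mul_assoc, mul_assoc, mul_assoc]
      _ = w * Wt' * f ^ (t.length + 1) := by rw [pow_succ']

theorem units_of_ufsr {R : Type*} [Ring R] (J : Ideal R)
    (h1 : (1:R) ∉ J)
    (hpr : ∀ a b : R, a * b ∈ J → a ∈ J ∨ b ∈ J)
    (hright : ∀ x ∈ J, ∀ r : R, x * r ∈ J)
    (hnil : ∀ j ∈ J, IsNilpotent j)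
    (z₀ : R) (hz0 : z₀ ≠ 0) (hzJ : z₀ ∈ J)
    (hcen : ∀ r : R, z₀ * r = r * z₀)
    (hzann : ∀ j ∈ J, z₀ * j = 0)
    (hufsr : IsUFSR R) :
    ∀ x : R, x ∉ J → IsUnit x := by
  intro x hxJ
  by_contra hxu
  have hx0 : x ≠ 0 := fun h => hxJ (h ▸ J.zero_mem)
  obtain ⟨d, F, hF, hFx⟩ := hufsr.1 x hx0 hxu
  obtain ⟨f, hfn, hfi, hfJ⟩ : ∃ f : R, SNormal f ∧ SIrreducible f ∧ f ∉ J := by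
    rcases d with _ | d'
    · exact absurd (by simpa using hFx ▸ isUnit_one : IsUnit x) hxu
    · refine ⟨F 0, (hF 0).1, (hF 0).2, fun hmem => hxJ ?_⟩
      have hx' : x = F 0 * (List.ofFn fun i : Fin d' => F i.succ).prod := by
        rw [hFx, List.ofFn_succ, List.prod_cons]
      rw [hx']; exact hright _ hmem _
  have hfu : ¬ IsUnit f := hfi.1
  have hpow : ∀ k : ℕ, f ^ k ∉ J := by
    intro k; induction k with
    | zero => simpa using h1
    | succ k ih =>
      intro h
      rcases hpr _ _ ((pow_succ f k) ▸ h) with h' | h'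
      exacts [ih h', hfJ h']
  have hone_add : ∀ j ∈ J, IsUnit (1 + j) := by
    intro j hj
    have := (hnil j hj).isUnit_add_right_of_commute isUnit_one (Commute.one_right j)
    rwa [add_comm] at this
  have hnoinv : ∀ c : R, c * f = 1 → False := by
    intro c hc
    have h1mem : (1:R) ∈ {x : R | ∃ r, x = f * r} := by
      rw [hfn]; exact ⟨c, hc.symm⟩
    obtain ⟨e, he⟩ := h1mem
    have hce : c = e := by
      calc c = c * (f * e) := by rw [← he, mul_one]
        _ = c * f * e := by rw [mul_assoc]
        _ = e := by rw [hc, one_mul]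
    exact hfu ⟨⟨f, c, by rw [← hce] at he; exact he.symm, hc⟩, rfl⟩
  have key : ∀ (k r : ℕ) (W w : R), w ∈ J → W * f ^ r = f ^ k + w → r ≤ k := by
    intro k r W w hw heq
    by_contra hlt
    push_neg at hlt
    have hrw : W * f ^ r = (W * f ^ (r - k)) * f ^ k := by
      rw [mul_assoc, ← pow_add]
      congr 2
      omega
    have hsub : (W * f ^ (r - k) - 1) * f ^ k = w := by
      rw [sub_mul, one_mul, ← hrw, heq]
      abel
    rcases hpr _ _ (hsub ▸ hw) with h' | h'
    · have hu : IsUnit (W * f ^ (r - k)) := by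
        have := hone_add _ h'
        rwa [add_sub_cancel] at this
      have hre : W * f ^ (r - k) = (W * f ^ (r - k - 1)) * f := by
        rw [mul_assoc, ← pow_succ]
        congr 2
        omega
      rw [hre] at hu
      obtain ⟨u, hu'⟩ := hu
      refine hnoinv (↑u⁻¹ * (W * f ^ (r - k - 1))) ?_
      rw [mul_assoc, ← hu', Units.inv_mul]
    · exact hpow k h'

  have hzmulJ : ∀ r : R, r * z₀ ∈ J := fun r => J.mul_mem_left r hzJ
  have main : ∀ k : ℕ, 1 ≤ k → ∃ (dd : ℕ) (H : Fin dd → R),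
      k + 1 ≤ dd ∧ (∀ i, SNormal (H i) ∧ SIrreducible (H i)) ∧ z₀ = (List.ofFn H).prod := by
    intro k hk
    have hz2 : z₀ * z₀ = 0 := hzann z₀ hzJ
    have hcenk : z₀ * f ^ k = f ^ k * z₀ := hcen _
    have hyy' : (f ^ k + z₀) * (f ^ k - z₀) = f ^ (2 * k) := by
      have expand : (f ^ k + z₀) * (f ^ k - z₀)
          = f ^ k * f ^ k - f ^ k * z₀ + z₀ * f ^ k - z₀ * z₀ := by
        rw [add_mul, mul_sub, mul_sub]
        abel
      rw [expand, hcenk, hz2, two_mul, pow_add]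
      abel
    have hy0 : f ^ k + z₀ ≠ 0 := by
      intro h
      exact hpow k (by rw [eq_neg_of_add_eq_zero_left h]; exact J.neg_mem hzJ)
    have hy'0 : f ^ k - z₀ ≠ 0 := by
      intro h
      exact hpow k (by rw [sub_eq_zero.mp h]; exact hzJ)
    have hyu : ¬ IsUnit (f ^ k + z₀) := by
      rintro ⟨u, hu⟩
      have hfk : ↑u * (1 + ↑u⁻¹ * (-z₀)) = f ^ k := by
        rw [mul_add, mul_one, ← mul_assoc, Units.mul_inv, one_mul, hu]
        abel
      have : IsUnit (f ^ k) := by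
        rw [← hfk]
        exact u.isUnit.mul (hone_add _ (J.mul_mem_left _ (J.neg_mem hzJ)))
      exact hfu ((isUnit_pow_iff (by omega)).1 this)
    have hy'u : ¬ IsUnit (f ^ k - z₀) := by
      rintro ⟨u, hu⟩
      have hfk : ↑u * (1 + ↑u⁻¹ * z₀) = f ^ k := by
        rw [mul_add, mul_one, ← mul_assoc, Units.mul_inv, one_mul, hu]
        abel
      have : IsUnit (f ^ k) := by
        rw [← hfk]
        exact u.isUnit.mul (hone_add _ (J.mul_mem_left _ hzJ))
      exact hfu ((isUnit_pow_iff (by omega)).1 this)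
    obtain ⟨r, P, hP, hPy⟩ := hufsr.1 _ hy0 hyu
    obtain ⟨s, Q, hQ, hQy⟩ := hufsr.1 _ hy'0 hy'u
    have hx2k0 : f ^ (2 * k) ≠ 0 := fun h => hpow (2 * k) (h ▸ J.zero_mem)
    have hx2ku : ¬ IsUnit (f ^ (2 * k)) := fun h => hfu ((isUnit_pow_iff (by omega)).1 h)
    have hGprops : ∀ i : Fin (r + s), SNormal (Fin.append P Q i) ∧ SIrreducible (Fin.append P Q i) := by
      intro i
      refine Fin.addCases (fun j => ?_) (fun j => ?_) i
      · rw [Fin.append_left]; exact hP j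
      · rw [Fin.append_right]; exact hQ j
    have hGprod : f ^ (2 * k) = (List.ofFn (Fin.append P Q)).prod := by
      have e1 : (fun i : Fin r => Fin.append P Q (Fin.castLE (Nat.le_add_right r s) i)) = P :=
        funext fun i => Fin.append_left P Q i
      have e2 : (fun j : Fin s => Fin.append P Q (Fin.natAdd r j)) = Q :=
        funext fun j => Fin.append_right P Q j
      rw [List.ofFn_add, List.prod_append, e1, e2, ← hyy', hPy, hQy]
    obtain ⟨hlen, σ, hassoc⟩ := hufsr.2 (f ^ (2 * k)) hx2k0 hx2ku (2 * k) (r + s)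
      (fun _ => f) (Fin.append P Q) (fun _ => ⟨hfn, hfi⟩) hGprops
      (by rw [List.ofFn_const, List.prod_replicate]) hGprod
    have hassoc' : ∀ j : Fin (r + s), ∃ u v : Rˣ, Fin.append P Q j = ↑u * f * ↑v := by
      intro j
      obtain ⟨u, v, huv⟩ := hassoc (σ.symm j)
      rw [Equiv.apply_symm_apply] at huv
      refine ⟨u⁻¹, v⁻¹, ?_⟩
      rw [huv]
      calc Fin.append P Q j
          = (↑u⁻¹ * ↑u) * Fin.append P Q j * (↑v * ↑v⁻¹) := by
            rw [Units.inv_mul, Units.mul_inv, one_mul, mul_one]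
        _ = ↑u⁻¹ * (↑u * Fin.append P Q j * ↑v) * ↑v⁻¹ := by
            simp only [mul_assoc]
    have hform : ∀ (m : ℕ) (T : Fin m → R), (∀ i : Fin m, ∃ u v : Rˣ, T i = ↑u * f * ↑v) →
        ∃ W : R, (List.ofFn T).prod = W * f ^ m := by
      intro m T hT
      have : ∀ x ∈ List.ofFn T, ∃ w, x = w * f := by
        intro x hx
        obtain ⟨i, hi⟩ := List.mem_ofFn.1 hx
        obtain ⟨u, v, huv⟩ := hT i
        obtain ⟨v', hv'⟩ := snormal_left hfn ↑v
        exact ⟨↑u * v', by rw [← hi, huv, mul_assoc, hv', ← mul_assoc]⟩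
      obtain ⟨W, hW⟩ := prod_form hfn _ this
      rw [List.length_ofFn] at hW
      exact ⟨W, hW⟩
    obtain ⟨W, hW⟩ := hform r P (fun i => by
      have := hassoc' (Fin.castAdd s i)
      rwa [Fin.append_left] at this)
    obtain ⟨W', hW'⟩ := hform s Q (fun i => by
      have := hassoc' (Fin.natAdd r i)
      rwa [Fin.append_right] at this)
    have hrk : r ≤ k := key k r W z₀ hzJ (by rw [← hW, ← hPy])
    have hsk : s ≤ k := key k s W' (-z₀) (J.neg_mem hzJ) (by
      rw [← hW', ← hQy]
      abel)
    have hrek : r = k := by omega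
    have hWk : (List.ofFn P).prod = W * f ^ k := by rw [hW, hrek]
    have hzeq : z₀ = (W - 1) * f ^ k := by
      rw [sub_mul, one_mul, ← hWk, ← hPy]
      abel
    have hW10 : W - 1 ≠ 0 := by
      intro h
      rw [h, zero_mul] at hzeq
      exact hz0 hzeq
    have hW1u : ¬ IsUnit (W - 1) := by
      rintro ⟨u, hu⟩
      refine hpow k ?_
      have : f ^ k = ↑u⁻¹ * z₀ := by
        rw [hzeq, ← hu, ← mul_assoc, Units.inv_mul, one_mul]
      rw [this]
      exact J.mul_mem_left _ hzJ
    obtain ⟨h, H₁, hH₁, hH₁e⟩ := hufsr.1 _ hW10 hW1u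
    have hh1 : 1 ≤ h := by
      rcases Nat.eq_zero_or_pos h with h0 | h0
      · subst h0
        simp only [List.ofFn_zero, List.prod_nil] at hH₁e
        exact absurd (by rw [hH₁e]; exact isUnit_one) hW1u
      · exact h0
    refine ⟨h + k, Fin.append H₁ (fun _ : Fin k => f), by omega, ?_, ?_⟩
    · intro i
      refine Fin.addCases (fun j => ?_) (fun j => ?_) i
      · rw [Fin.append_left]; exact hH₁ j
      · rw [Fin.append_right]; exact ⟨hfn, hfi⟩
    · have e1 : (fun i : Fin h => Fin.append H₁ (fun _ : Fin k => f) (Fin.castLE (Nat.le_add_right h k) i)) = H₁ :=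
        funext fun i => Fin.append_left H₁ _ i
      have e2 : (fun j : Fin k => Fin.append H₁ (fun _ : Fin k => f) (Fin.natAdd h j))
          = (fun _ : Fin k => f) :=
        funext fun j => Fin.append_right H₁ _ j
      rw [List.ofFn_add, List.prod_append, e1, e2, List.ofFn_const, List.prod_replicate,
        hzeq, hH₁e]
  have hz0u : ¬ IsUnit z₀ := by
    rintro ⟨u, hu⟩
    refine h1 ?_
    have : (1 : R) = ↑u⁻¹ * z₀ := by rw [← hu, Units.inv_mul]
    rw [this]
    exact J.mul_mem_left _ hzJ
  obtain ⟨L, Z, hZ, hZe⟩ := hufsr.1 z₀ hz0 hz0u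
  obtain ⟨dd, H, hdd, hH, hHe⟩ := main (L + 1) (by omega)
  obtain ⟨hLd, -⟩ := hufsr.2 z₀ hz0 hz0u L dd Z H hZ hH hZe hHe
  omega
end Part1


section Part2
open DirectSum

variable {R : Type*} [Ring R] (𝒜 : ZMod 2 → AddSubgroup R) [GradedRing 𝒜]

theorem decompose_two (r : R) :
    (decompose 𝒜 r 0 : R) + (decompose 𝒜 r 1 : R) = r := by
  classical
  conv_rhs => rw [← DirectSum.sum_support_decompose 𝒜 r]
  rw [Finset.sum_subset (Finset.subset_univ _)
    (by intro x _ hx; simp [DFinsupp.notMem_support_iff.mp hx])]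
  exact (Fin.sum_univ_two fun i => (decompose 𝒜 r i : R)).symm

theorem even_comm (hsc : SuperComm 𝒜) {c : R} (hc : c ∈ 𝒜 0) (r : R) :
    c * r = r * c := by
  have h0 := hsc 0 0 c hc _ (SetLike.coe_mem (decompose 𝒜 r 0))
  have h1 := hsc 0 1 c hc _ (SetLike.coe_mem (decompose 𝒜 r 1))
  have hv0 : (0 : ZMod 2).val = 0 := rfl
  rw [hv0, zero_mul, pow_zero, one_smul] at h0 h1
  calc c * r = c * ((decompose 𝒜 r 0 : R) + (decompose 𝒜 r 1 : R)) := by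
        rw [decompose_two]
    _ = c * (decompose 𝒜 r 0 : R) + c * (decompose 𝒜 r 1 : R) := by rw [mul_add]
    _ = (decompose 𝒜 r 0 : R) * c + (decompose 𝒜 r 1 : R) * c := by rw [h0, h1]
    _ = ((decompose 𝒜 r 0 : R) + (decompose 𝒜 r 1 : R)) * c := by rw [add_mul]
    _ = r * c := by rw [decompose_two]

theorem odd_anticomm (hsc : SuperComm 𝒜) {a b : R} (ha : a ∈ 𝒜 1) (hb : b ∈ 𝒜 1) :
    a * b = -(b * a) := by
  have h := hsc 1 1 a ha b hb
  have hv1 : (1 : ZMod 2).val = 1 := rfl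
  rw [hv1, one_mul, pow_one, neg_smul, one_smul] at h
  exact h

theorem odd_sq (hsc : SuperComm 𝒜) (h2 : TwoRegular R) {a : R} (ha : a ∈ 𝒜 1) :
    a * a = 0 := by
  have h := odd_anticomm 𝒜 hsc ha ha
  refine h2 _ ?_
  rw [two_mul]
  nth_rewrite 1 [h]
  abel

theorem even_inv (hsc : SuperComm 𝒜) {c : R} (hc : c ∈ 𝒜 0) (hu : IsUnit c) :
    ∃ b ∈ 𝒜 0, c * b = 1 ∧ b * c = 1 := by
  obtain ⟨u, hu'⟩ := hu
  set w : R := ↑u⁻¹ with hw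
  have hcb : c * ((decompose 𝒜 w 0 : R) + (decompose 𝒜 w 1 : R)) = 1 := by
    rw [decompose_two, ← hu', Units.mul_inv]
  rw [mul_add] at hcb
  have h0 : c * (decompose 𝒜 w 0 : R) ∈ 𝒜 0 := by
    have := SetLike.mul_mem_graded hc (SetLike.coe_mem (decompose 𝒜 w 0))
    simpa using this
  have h1 : c * (decompose 𝒜 w 1 : R) ∈ 𝒜 1 := by
    have := SetLike.mul_mem_graded hc (SetLike.coe_mem (decompose 𝒜 w 1))
    simpa using this
  -- the odd part of 1 is 0, even part is 1
  have hkey : c * (decompose 𝒜 w 0 : R) = 1 := by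
    have hsum : c * (decompose 𝒜 w 0 : R) - 1 = - (c * (decompose 𝒜 w 1 : R)) := by
      rw [← hcb]; abel
    have hmem0 : c * (decompose 𝒜 w 0 : R) - 1 ∈ 𝒜 0 :=
      (𝒜 0).sub_mem h0 (SetLike.one_mem_graded 𝒜)
    have hmem1 : c * (decompose 𝒜 w 0 : R) - 1 ∈ 𝒜 1 := by
      rw [hsum]; exact (𝒜 1).neg_mem h1
    -- 𝒜 0 ∩ 𝒜 1 = 0
    have : c * (decompose 𝒜 w 0 : R) - 1 = 0 := by
      have e1 : (decompose 𝒜 (c * (decompose 𝒜 w 0 : R) - 1) 1 : R)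
          = c * (decompose 𝒜 w 0 : R) - 1 := DirectSum.decompose_of_mem_same 𝒜 hmem1
      have e2 : (decompose 𝒜 (c * (decompose 𝒜 w 0 : R) - 1) 1 : R) = 0 :=
        DirectSum.decompose_of_mem_ne 𝒜 hmem0 (by decide)
      rw [e1] at e2; exact e2
    have := sub_eq_zero.mp this
    exact this
  refine ⟨(decompose 𝒜 w 0 : R), SetLike.coe_mem _, hkey, ?_⟩
  rw [even_comm 𝒜 hsc (SetLike.coe_mem (decompose 𝒜 w 0)) c]
  exact hkey
end Part2

section Part3
open DirectSum

variable {R : Type*} [Ring R] (𝒜 : ZMod 2 → AddSubgroup R) [GradedRing 𝒜]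

theorem mem_even {x : R} (h : x ∈ evenSubring 𝒜) : x ∈ 𝒜 0 := h

/-- Generators for the `k`-th piece of the filtration: products of at least `k`
of the odd generators. -/
def Wgen {n : ℕ} (z : Fin n → R) (k : ℕ) : Set R :=
  {x | ∃ L : List R, k ≤ L.length ∧ (∀ y ∈ L, ∃ j, y = z j) ∧ x = L.prod}

def Wmod {n : ℕ} (z : Fin n → R) (k : ℕ) : Submodule (evenSubring 𝒜) R :=
  Submodule.span (evenSubring 𝒜) (Wgen z k)

variable {n : ℕ} {z : Fin n → R}

theorem even_smul_def (c : evenSubring 𝒜) (x : R) : c • x = (c : R) * x := rfl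

theorem W_anti {k l : ℕ} (h : k ≤ l) : Wmod 𝒜 z l ≤ Wmod 𝒜 z k :=
  Submodule.span_mono (fun x ⟨L, hL, hm, hp⟩ => ⟨L, le_trans h hL, hm, hp⟩)

theorem Wleft (hsc : SuperComm 𝒜)
    (hgen : ∀ x ∈ 𝒜 1, ∃ a : Fin n → R, (∀ j, a j ∈ 𝒜 0) ∧ x = ∑ j, a j * z j)
    {k : ℕ} (r : R) : ∀ {x : R}, x ∈ Wmod 𝒜 z k → r * x ∈ Wmod 𝒜 z k := by
  intro x hx
  induction hx using Submodule.span_induction with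
  | mem x hxg =>
    obtain ⟨L, hlen, hmem, rfl⟩ := hxg
    rw [← decompose_two 𝒜 r, add_mul]
    refine Submodule.add_mem _ ?_ ?_
    · have he : (decompose 𝒜 r 0 : R) * L.prod
          = (⟨_, SetLike.coe_mem (decompose 𝒜 r 0)⟩ : evenSubring 𝒜) • L.prod := rfl
      rw [he]
      exact Submodule.smul_mem _ _ (Submodule.subset_span ⟨L, hlen, hmem, rfl⟩)
    · obtain ⟨a, ha, he⟩ := hgen _ (SetLike.coe_mem (decompose 𝒜 r 1))
      rw [he, Finset.sum_mul]
      refine Submodule.sum_mem _ (fun j _ => ?_)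
      have hsm : a j * z j * L.prod = (⟨a j, ha j⟩ : evenSubring 𝒜) • (z j * L.prod) := by
        rw [even_smul_def, mul_assoc]
      rw [hsm]
      refine Submodule.smul_mem _ _ (Submodule.subset_span ⟨z j :: L, ?_, ?_, ?_⟩)
      · simpa using Nat.le_succ_of_le hlen
      · intro y hy
        rcases List.mem_cons.mp hy with h | h
        exacts [⟨j, h⟩, hmem y h]
      · rw [List.prod_cons]
  | zero => rw [mul_zero]; exact Submodule.zero_mem _
  | add x y hx hy ihx ihy => rw [mul_add]; exact Submodule.add_mem _ ihx ihy
  | smul c x hx ih =>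
    have hc : r * (c • x) = c • (r * x) := by
      rw [even_smul_def, even_smul_def, ← mul_assoc, ← even_comm 𝒜 hsc (mem_even 𝒜 c.2) r,
        mul_assoc]
    rw [hc]
    exact Submodule.smul_mem _ _ ih

theorem Wright (hsc : SuperComm 𝒜)
    (hgen : ∀ x ∈ 𝒜 1, ∃ a : Fin n → R, (∀ j, a j ∈ 𝒜 0) ∧ x = ∑ j, a j * z j)
    {k : ℕ} (r : R) : ∀ {x : R}, x ∈ Wmod 𝒜 z k → x * r ∈ Wmod 𝒜 z k := by
  intro x hx
  induction hx using Submodule.span_induction with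
  | mem x hxg =>
    obtain ⟨L, hlen, hmem, rfl⟩ := hxg
    rw [← decompose_two 𝒜 r, mul_add]
    refine Submodule.add_mem _ ?_ ?_
    · have he : L.prod * (decompose 𝒜 r 0 : R)
          = (⟨_, SetLike.coe_mem (decompose 𝒜 r 0)⟩ : evenSubring 𝒜) • L.prod := by
        rw [even_smul_def, even_comm 𝒜 hsc (SetLike.coe_mem (decompose 𝒜 r 0)) L.prod]
      rw [he]
      exact Submodule.smul_mem _ _ (Submodule.subset_span ⟨L, hlen, hmem, rfl⟩)
    · obtain ⟨a, ha, he⟩ := hgen _ (SetLike.coe_mem (decompose 𝒜 r 1))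
      rw [he, Finset.mul_sum]
      refine Submodule.sum_mem _ (fun j _ => ?_)
      have hsm : L.prod * (a j * z j) = (⟨a j, ha j⟩ : evenSubring 𝒜) • (L.prod * z j) := by
        rw [even_smul_def, ← mul_assoc, ← even_comm 𝒜 hsc (ha j) L.prod, mul_assoc]
      rw [hsm]
      refine Submodule.smul_mem _ _ (Submodule.subset_span ⟨L ++ [z j], ?_, ?_, ?_⟩)
      · rw [List.length_append]; omega
      · intro y hy
        rcases List.mem_append.mp hy with h | h
        · exact hmem y h
        · exact ⟨j, List.mem_singleton.mp h⟩
      · rw [List.prod_append, List.prod_singleton]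
  | zero => rw [zero_mul]; exact Submodule.zero_mem _
  | add x y hx hy ihx ihy => rw [add_mul]; exact Submodule.add_mem _ ihx ihy
  | smul c x hx ih =>
    have hc : (c • x) * r = c • (x * r) := by
      rw [even_smul_def, even_smul_def, mul_assoc]
    rw [hc]
    exact Submodule.smul_mem _ _ ih

theorem Wmul (hsc : SuperComm 𝒜) {a b : ℕ} :
    ∀ {x y : R}, x ∈ Wmod 𝒜 z a → y ∈ Wmod 𝒜 z b → x * y ∈ Wmod 𝒜 z (a + b) := by
  intro x y hx hy
  induction hy using Submodule.span_induction with
  | mem y hyg =>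
    induction hx using Submodule.span_induction with
    | mem x hxg =>
      obtain ⟨L1, hl1, hm1, rfl⟩ := hxg
      obtain ⟨L2, hl2, hm2, rfl⟩ := hyg
      refine Submodule.subset_span ⟨L1 ++ L2, ?_, ?_, ?_⟩
      · rw [List.length_append]; omega
      · intro y hy
        rcases List.mem_append.mp hy with h | h
        exacts [hm1 y h, hm2 y h]
      · rw [List.prod_append]
    | zero => rw [zero_mul]; exact Submodule.zero_mem _
    | add x x' hx hx' ihx ihx' => rw [add_mul]; exact Submodule.add_mem _ ihx ihx'
    | smul c x hx ih =>
      have hc : (c • x) * y = c • (x * y) := by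
        rw [even_smul_def, even_smul_def, mul_assoc]
      rw [hc]
      exact Submodule.smul_mem _ _ ih
  | zero => rw [mul_zero]; exact Submodule.zero_mem _
  | add y y' hy hy' ihy ihy' => rw [mul_add]; exact Submodule.add_mem _ ihy ihy'
  | smul c y hy ih =>
    have hc : x * (c • y) = c • (x * y) := by
      rw [even_smul_def, even_smul_def, ← mul_assoc, ← even_comm 𝒜 hsc (mem_even 𝒜 c.2) x,
        mul_assoc]
    rw [hc]
    exact Submodule.smul_mem _ _ ih

theorem odd_sign (hsc : SuperComm 𝒜) :
    ∀ (B : List R), (∀ y ∈ B, y ∈ 𝒜 1) → ∀ {c : R}, c ∈ 𝒜 1 →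
      c * B.prod = ((-1 : ℤ) ^ B.length) • (B.prod * c) := by
  intro B
  induction B with
  | nil => intro _ c _; simp
  | cons b t ih =>
    intro hmem c hc
    have hbt : b ∈ 𝒜 1 := hmem b List.mem_cons_self
    have ht : ∀ y ∈ t, y ∈ 𝒜 1 := fun y hy => hmem y (List.mem_cons_of_mem b hy)
    calc c * (b :: t).prod = (c * b) * t.prod := by rw [List.prod_cons, mul_assoc]
      _ = (-(b * c)) * t.prod := by rw [odd_anticomm 𝒜 hsc hc hbt]
      _ = -(b * (c * t.prod)) := by rw [neg_mul, mul_assoc]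
      _ = -(b * (((-1 : ℤ) ^ t.length) • (t.prod * c))) := by rw [ih ht hc]
      _ = (-((-1 : ℤ) ^ t.length)) • (b * (t.prod * c)) := by
          rw [mul_smul_comm, neg_smul]
      _ = ((-1 : ℤ) ^ (b :: t).length) • ((b :: t).prod * c) := by
          rw [List.length_cons, List.prod_cons, pow_succ, mul_comm ((-1:ℤ)^t.length) (-1)]
          rw [neg_one_mul, mul_assoc]

theorem dup_prod_zero (hsc : SuperComm 𝒜) (h2 : TwoRegular R) :
    ∀ (L : List R), (∀ y ∈ L, y ∈ 𝒜 1) → ¬ L.Nodup → L.prod = 0 := by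
  intro L
  induction L with
  | nil => intro _ h; exact absurd List.nodup_nil h
  | cons a t ih =>
    intro hmem hnd
    have hat : a ∈ 𝒜 1 := hmem a List.mem_cons_self
    have ht : ∀ y ∈ t, y ∈ 𝒜 1 := fun y hy => hmem y (List.mem_cons_of_mem a hy)
    by_cases hin : a ∈ t
    · obtain ⟨s, t2, rfl⟩ := List.append_of_mem hin
      have hs : ∀ y ∈ s, y ∈ 𝒜 1 := fun y hy => ht y (List.mem_append_left _ hy)
      rw [List.prod_cons, List.prod_append, List.prod_cons]
      calc a * (s.prod * (a * t2.prod)) = (a * s.prod) * (a * t2.prod) := by rw [mul_assoc]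
        _ = (((-1 : ℤ) ^ s.length) • (s.prod * a)) * (a * t2.prod) := by
            rw [odd_sign 𝒜 hsc s hs hat]
        _ = ((-1 : ℤ) ^ s.length) • (s.prod * a * (a * t2.prod)) := by rw [smul_mul_assoc]
        _ = ((-1 : ℤ) ^ s.length) • (s.prod * ((a * a) * t2.prod)) := by
            rw [mul_assoc, ← mul_assoc a a t2.prod]
        _ = 0 := by rw [odd_sq 𝒜 hsc h2 hat, zero_mul, mul_zero, smul_zero]
    · rw [List.nodup_cons] at hnd
      have hnt : ¬ t.Nodup := fun h => hnd ⟨hin, h⟩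
      rw [List.prod_cons, ih ht hnt, mul_zero]

theorem W_nodup_len (hz : ∀ j, z j ∈ 𝒜 1) :
    ∀ (L : List R), (∀ y ∈ L, ∃ j, y = z j) → L.Nodup → L.length ≤ n := by
  classical
  intro L hmem hnd
  have hsub : L.toFinset ⊆ Finset.image z Finset.univ := by
    intro y hy
    rw [List.mem_toFinset] at hy
    obtain ⟨j, rfl⟩ := hmem y hy
    exact Finset.mem_image_of_mem z (Finset.mem_univ j)
  calc L.length = L.toFinset.card := (List.toFinset_card_of_nodup hnd).symm
    _ ≤ (Finset.image z Finset.univ).card := Finset.card_le_card hsub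
    _ ≤ Finset.univ.card := Finset.card_image_le
    _ = n := by simp

theorem Wtop (hsc : SuperComm 𝒜) (h2 : TwoRegular R) (hz : ∀ j, z j ∈ 𝒜 1) :
    Wmod 𝒜 z (n + 1) = ⊥ := by
  refine le_bot_iff.mp (Submodule.span_le.mpr ?_)
  rintro x ⟨L, hlen, hmem, rfl⟩
  have hentries : ∀ y ∈ L, y ∈ 𝒜 1 := by
    intro y hy
    obtain ⟨j, rfl⟩ := hmem y hy
    exact hz j
  have hnnd : ¬ L.Nodup := by
    intro h
    have := W_nodup_len 𝒜 hz L hmem h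
    omega
  have := dup_prod_zero 𝒜 hsc h2 L hentries hnnd
  simp [this]

theorem Wzero (hgen : ∀ x ∈ 𝒜 1, ∃ a : Fin n → R, (∀ j, a j ∈ 𝒜 0) ∧ x = ∑ j, a j * z j) :
    Wmod 𝒜 z 0 = ⊤ := by
  rw [eq_top_iff]
  rintro r -
  rw [← decompose_two 𝒜 r]
  refine Submodule.add_mem _ ?_ ?_
  · have he : (decompose 𝒜 r 0 : R)
        = (⟨_, SetLike.coe_mem (decompose 𝒜 r 0)⟩ : evenSubring 𝒜) • (1 : R) := by
      rw [even_smul_def, mul_one]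
    rw [he]
    refine Submodule.smul_mem _ _ (Submodule.subset_span ⟨[], by simp, by simp, by simp⟩)
  · obtain ⟨a, ha, he⟩ := hgen _ (SetLike.coe_mem (decompose 𝒜 r 1))
    rw [he]
    refine Submodule.sum_mem _ fun j _ => ?_
    have hsm : a j * z j = (⟨a j, ha j⟩ : evenSubring 𝒜) • z j := rfl
    rw [hsm]
    refine Submodule.smul_mem _ _ (Submodule.subset_span ⟨[z j], by simp, ?_, by simp⟩)
    intro y hy
    exact ⟨j, List.mem_singleton.mp hy⟩

theorem J_sub_W1 (hsc : SuperComm 𝒜)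
    (hgen : ∀ x ∈ 𝒜 1, ∃ a : Fin n → R, (∀ j, a j ∈ 𝒜 0) ∧ x = ∑ j, a j * z j) :
    ∀ {x : R}, x ∈ canonicalSuperideal 𝒜 → x ∈ Wmod 𝒜 z 1 := by
  intro x hx
  induction hx using Submodule.span_induction with
  | mem x hxg =>
    obtain ⟨a, ha, he⟩ := hgen x hxg
    rw [he]
    refine Submodule.sum_mem _ fun j _ => ?_
    have hsm : a j * z j = (⟨a j, ha j⟩ : evenSubring 𝒜) • z j := rfl
    rw [hsm]
    refine Submodule.smul_mem _ _ (Submodule.subset_span ⟨[z j], by simp, ?_, by simp⟩)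
    intro y hy
    exact ⟨j, List.mem_singleton.mp hy⟩
  | zero => exact Submodule.zero_mem _
  | add x y hx hy ihx ihy => exact Submodule.add_mem _ ihx ihy
  | smul c x hx ih => exact Wleft 𝒜 hsc hgen c ih

theorem W1_sub_J (hz : ∀ j, z j ∈ 𝒜 1) :
    ∀ {x : R}, x ∈ Wmod 𝒜 z 1 → x ∈ canonicalSuperideal 𝒜 := by
  intro x hx
  induction hx using Submodule.span_induction with
  | mem x hxg =>
    obtain ⟨L, hlen, hmem, rfl⟩ := hxg
    rcases List.eq_nil_or_concat L with rfl | ⟨L', y, rfl⟩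
    · simp at hlen
    · have hy : y ∈ L'.concat y := by simp
      obtain ⟨j, rfl⟩ := hmem y hy
      rw [List.concat_eq_append, List.prod_append, List.prod_singleton]
      exact Ideal.mul_mem_left _ _ (Ideal.subset_span (hz j))
  | zero => exact Submodule.zero_mem _
  | add x y hx hy ihx ihy => exact Submodule.add_mem _ ihx ihy
  | smul c x hx ih => exact Ideal.mul_mem_left _ _ ih

end Part3

section Part4

theorem artinian_helper {S M : Type*} [CommRing S] [AddCommGroup M] [Module S M]
    (m : Ideal S) (hmax : m.IsMaximal) (hfg : Module.Finite S M)
    (htor : ∀ c ∈ m, ∀ x : M, c • x = (0 : M)) : IsArtinian S M := by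
  haveI := hmax
  letI : Field (S ⧸ m) := Ideal.Quotient.field m
  have htor' : Module.IsTorsionBySet S M (m : Set S) := fun x a => htor a.1 a.2 x
  letI : Module (S ⧸ m) M := htor'.module
  haveI : IsScalarTower S (S ⧸ m) M := htor'.isScalarTower
  haveI := hfg
  haveI : Module.Finite (S ⧸ m) M := Module.Finite.of_restrictScalars_finite S (S ⧸ m) M
  haveI hQart : IsArtinian (S ⧸ m) M := inferInstance
  -- every `S`-submodule is an `S ⧸ m`-submodule, so well-foundedness transfers
  have hsub : ∀ N : Submodule S M, ∃ N' : Submodule (S ⧸ m) M, ∀ x : M, x ∈ N' ↔ x ∈ N := by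
    intro N
    refine ⟨{ carrier := (N : Set M)
              add_mem' := fun ha hb => N.add_mem ha hb
              zero_mem' := N.zero_mem
              smul_mem' := ?_ }, fun x => Iff.rfl⟩
    intro c x hx
    obtain ⟨s, rfl⟩ := Ideal.Quotient.mk_surjective c
    show Ideal.Quotient.mk m s • x ∈ (N : Set M)
    rw [htor'.mk_smul]
    exact N.smul_mem s hx
  choose F hF using hsub
  have hFlt : ∀ N N' : Submodule S M, N < N' → F N < F N' := by
    intro N N' h
    rw [lt_iff_le_not_ge] at h ⊢
    refine ⟨fun x hx => (hF N' x).mpr (h.1 ((hF N x).mp hx)), fun hcon => ?_⟩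
    exact h.2 (fun x hx => (hF N x).mp (hcon ((hF N' x).mpr hx)))
  refine (isArtinian_iff S M).mpr ?_
  have hwf : WellFounded ((· < ·) : Submodule (S ⧸ m) M → _ → Prop) :=
    (isArtinian_iff _ _).mp hQart
  exact Subrelation.wf (fun {a b} h => hFlt a b h) (InvImage.wf F hwf)

end Part4


/-- **Theorem 3.13 (thm:sartin)**: a Noetherian unique factorization superdomain is
local with maximal ideal `𝒥`, is an Artinian superring, and `𝒥` is its unique
(completely) prime ideal — so the even Krull superdimension is `0`. -/
theorem noetherian_ufsr_superdomain_artinian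
    {R : Type*} [Ring R] [Nontrivial R]
    (𝒜 : ZMod 2 → AddSubgroup R) [GradedRing 𝒜]
    (hsc : SuperComm 𝒜) (h2 : TwoRegular R) (hodd : 𝒜 1 ≠ ⊥)
    (hON : IsOddlyNoetherian 𝒜) (hNoeth : IsNoetherianRing (evenSubring 𝒜))
    (hdom : IsSuperdomain 𝒜) (hufsr : IsUFSR R) :
    (∀ x : R, IsUnit x ↔ x ∉ canonicalSuperideal 𝒜) ∧
      IsArtinianSuperring 𝒜 ∧
      (∀ P : Ideal R, (∀ x ∈ P, ∀ r : R, x * r ∈ P) →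
        (1 : R) ∉ P → (∀ a b : R, a * b ∈ P → a ∈ P ∨ b ∈ P) →
        P = canonicalSuperideal 𝒜) := by
    classical
  obtain ⟨n, z, hz, hgen⟩ := hON
  set J := canonicalSuperideal 𝒜 with hJdef
  have h1J : (1 : R) ∉ J := hdom.1
  have hprime : ∀ a b : R, a * b ∈ J → a ∈ J ∨ b ∈ J := hdom.2
  have hJright : ∀ x ∈ J, ∀ r : R, x * r ∈ J := fun x hx r =>
    W1_sub_J 𝒜 hz (Wright 𝒜 hsc hgen r (J_sub_W1 𝒜 hsc hgen hx))
  have hJnil : ∀ j ∈ J, IsNilpotent j := by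
    intro j hj
    refine ⟨n + 1, ?_⟩
    have hp : ∀ m : ℕ, j ^ (m + 1) ∈ Wmod 𝒜 z (m + 1) := by
      intro m
      induction m with
      | zero => simpa using J_sub_W1 𝒜 hsc hgen hj
      | succ m ih =>
        have := Wmul 𝒜 hsc ih (J_sub_W1 𝒜 hsc hgen hj)
        rwa [← pow_succ] at this
    have := hp n
    rw [Wtop 𝒜 hsc h2 hz] at this
    simpa using this
  -- a nonzero odd element
  obtain ⟨θ, hθ1, hθ0⟩ : ∃ θ : R, θ ∈ 𝒜 1 ∧ θ ≠ 0 := by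
    by_contra h
    push_neg at h
    exact hodd ((AddSubgroup.eq_bot_iff_forall _).mpr h)
  -- the top nonvanishing layer of the filtration
  have hWbot : ∃ k, Wmod 𝒜 z k = ⊥ := ⟨n + 1, Wtop 𝒜 hsc h2 hz⟩
  set K := Nat.find hWbot with hKdef
  have hKbot : Wmod 𝒜 z K = ⊥ := Nat.find_spec hWbot
  have hK2 : 2 ≤ K := by
    have h1K : 1 < K := by
      rw [Nat.lt_find_iff]
      intro k hk
      interval_cases k
      · intro h
        rw [Wzero 𝒜 hgen] at h
        have : (1 : R) ∈ (⊥ : Submodule (evenSubring 𝒜) R) := h ▸ Submodule.mem_top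
        exact one_ne_zero ((Submodule.mem_bot _).mp this)
      · intro h
        have hθW : θ ∈ Wmod 𝒜 z 1 := J_sub_W1 𝒜 hsc hgen (Ideal.subset_span hθ1)
        rw [h] at hθW
        exact hθ0 ((Submodule.mem_bot _).mp hθW)
    omega
  have hKm : Wmod 𝒜 z (K - 1) ≠ ⊥ := Nat.find_min hWbot (by omega)
  obtain ⟨z₀, hz₀W, hz₀0⟩ := (Submodule.ne_bot_iff _).mp hKm
  have hz₀J : z₀ ∈ J := W1_sub_J 𝒜 hz (W_anti 𝒜 (by omega : 1 ≤ K - 1) hz₀W)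
  have hz₀ann : ∀ j ∈ J, z₀ * j = 0 := by
    intro j hj
    have h := Wmul 𝒜 hsc hz₀W (J_sub_W1 𝒜 hsc hgen hj)
    rw [show K - 1 + 1 = K from by omega, hKbot] at h
    simpa using h
  have hannz₀ : ∀ j ∈ J, j * z₀ = 0 := by
    intro j hj
    have h := Wmul 𝒜 hsc (J_sub_W1 𝒜 hsc hgen hj) hz₀W
    rw [show 1 + (K - 1) = K from by omega, hKbot] at h
    simpa using h
  have hz₀cen : ∀ r : R, z₀ * r = r * z₀ := by
    intro r
    have hd := decompose_two 𝒜 r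
    have hd1J : (DirectSum.decompose 𝒜 r 1 : R) ∈ J := Ideal.subset_span (SetLike.coe_mem _)
    have e1 : z₀ * r = (DirectSum.decompose 𝒜 r 0 : R) * z₀ := by
      conv_lhs => rw [← hd]
      rw [mul_add, hz₀ann _ hd1J, add_zero,
        ← even_comm 𝒜 hsc (SetLike.coe_mem (DirectSum.decompose 𝒜 r 0)) z₀]
    have e2 : r * z₀ = (DirectSum.decompose 𝒜 r 0 : R) * z₀ := by
      conv_lhs => rw [← hd]
      rw [add_mul, hannz₀ _ hd1J, add_zero]
    rw [e1, e2]
  -- Part (a)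
  have hunits : ∀ x : R, x ∉ J → IsUnit x :=
    units_of_ufsr J h1J hprime hJright hJnil z₀ hz₀0 hz₀J hz₀cen hz₀ann hufsr
  have hpartA : ∀ x : R, IsUnit x ↔ x ∉ J := by
    intro x
    constructor
    · rintro ⟨u, rfl⟩ hmem
      have h := J.mul_mem_left (↑u⁻¹ : R) hmem
      rw [Units.inv_mul] at h
      exact h1J h
    · exact hunits x
  -- Part (c)
  have hpartC : ∀ P : Ideal R, (∀ x ∈ P, ∀ r : R, x * r ∈ P) → (1 : R) ∉ P →
      (∀ a b : R, a * b ∈ P → a ∈ P ∨ b ∈ P) → P = J := by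
    intro P _ h1P hPpr
    refine le_antisymm ?_ ?_
    · intro x hx
      by_contra hxJ
      obtain ⟨u, rfl⟩ := hunits x hxJ
      have h := P.mul_mem_left (↑u⁻¹ : R) hx
      rw [Units.inv_mul] at h
      exact h1P h
    · rw [hJdef]
      refine Ideal.span_le.mpr ?_
      intro t ht
      have hsq : t * t ∈ P := by
        rw [odd_sq 𝒜 hsc h2 ht]
        exact P.zero_mem
      rcases hPpr _ _ hsq with h | h <;> exact h
  -- Part (b)
  letI : CommRing (evenSubring 𝒜) :=
    { (inferInstance : Ring (evenSubring 𝒜)) with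
      mul_comm := fun a b => Subtype.ext (even_comm 𝒜 hsc a.2 (b : R)) }
  have hm : ∃ m : Ideal (evenSubring 𝒜), (∀ c : evenSubring 𝒜, c ∈ m ↔ (c : R) ∈ J) := by
    refine ⟨{ carrier := setOf (fun c : evenSubring 𝒜 => (c : R) ∈ J)
              add_mem' := fun ha hb => J.add_mem ha hb
              zero_mem' := J.zero_mem
              smul_mem' := fun d c hc => J.mul_mem_left (d : R) hc }, fun c => Iff.rfl⟩
  obtain ⟨m, hmem_m⟩ := hm
  have hmax : m.IsMaximal := by
    refine ⟨⟨?_, ?_⟩⟩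
    · intro h
      have h1m : (1 : evenSubring 𝒜) ∈ m := h ▸ Submodule.mem_top
      exact h1J (by simpa using (hmem_m 1).mp h1m)
    · intro I hI
      obtain ⟨x, hxI, hxm⟩ := SetLike.exists_of_lt hI
      have hxu : IsUnit (x : R) := hunits _ (fun hmem => hxm ((hmem_m x).mpr hmem))
      obtain ⟨b, hb0, hcb, hbc⟩ := even_inv 𝒜 hsc x.2 hxu
      have hxu' : IsUnit x := ⟨⟨x, ⟨b, hb0⟩, Subtype.ext hcb, Subtype.ext hbc⟩, rfl⟩
      exact Ideal.eq_top_of_isUnit_mem I hxI hxu'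
  -- R is a finite module over the even subring
  have hspanTop : Submodule.span (evenSubring 𝒜)
      (Set.range (Fin.cons (1 : R) z : Fin (n + 1) → R)) = ⊤ := by
    rw [eq_top_iff]
    rintro r -
    rw [← decompose_two 𝒜 r]
    refine Submodule.add_mem _ ?_ ?_
    · have he : (DirectSum.decompose 𝒜 r 0 : R)
          = (⟨_, SetLike.coe_mem (DirectSum.decompose 𝒜 r 0)⟩ : evenSubring 𝒜) • (1 : R) := by
        rw [even_smul_def, mul_one]
      rw [he]
      refine Submodule.smul_mem _ _ (Submodule.subset_span ⟨0, Fin.cons_zero _ _⟩)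
    · obtain ⟨a, ha, he⟩ := hgen _ (SetLike.coe_mem (DirectSum.decompose 𝒜 r 1))
      rw [he]
      refine Submodule.sum_mem _ fun j _ => ?_
      have hsm : a j * z j = (⟨a j, ha j⟩ : evenSubring 𝒜) • z j := rfl
      rw [hsm]
      exact Submodule.smul_mem _ _ (Submodule.subset_span ⟨j.succ, Fin.cons_succ _ _ _⟩)
  haveI hfinR : Module.Finite (evenSubring 𝒜) R :=
    ⟨⟨Finset.image (Fin.cons (1 : R) z) Finset.univ, by
      rw [Finset.coe_image, Finset.coe_univ, Set.image_univ]; exact hspanTop⟩⟩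
  haveI : IsNoetherianRing (evenSubring 𝒜) := hNoeth
  haveI hNoethR : IsNoetherian (evenSubring 𝒜) R := inferInstance
  -- descending induction on the filtration
  have hkill : ∀ (k : ℕ) (c : evenSubring 𝒜), c ∈ m →
      ∀ x ∈ Wmod 𝒜 z k, (c : R) * x ∈ Wmod 𝒜 z (k + 1) := by
    intro k c hc x hx
    have h1 : (c : R) ∈ Wmod 𝒜 z 1 := J_sub_W1 𝒜 hsc hgen ((hmem_m c).mp hc)
    have h := Wmul 𝒜 hsc h1 hx
    rwa [add_comm] at h
  have hart : ∀ j : ℕ, IsArtinian (evenSubring 𝒜) (R ⧸ Wmod 𝒜 z j) := by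
    intro j
    induction j with
    | zero =>
      haveI hss : Subsingleton (R ⧸ Wmod 𝒜 z 0) :=
        Submodule.Quotient.subsingleton_iff.mpr (Wzero 𝒜 hgen)
      refine (isArtinian_iff _ _).mpr (WellFounded.intro fun a => Acc.intro a fun b hb => ?_)
      exfalso
      have hba : b = a := by
        ext x
        rw [Subsingleton.elim x (0 : R ⧸ Wmod 𝒜 z 0)]
        simp
      exact lt_irrefl a (hba ▸ hb)
    | succ j ih =>
      have hle : Wmod 𝒜 z (j + 1) ≤ Wmod 𝒜 z j := W_anti 𝒜 (Nat.le_succ j)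
      set S : Submodule (evenSubring 𝒜) (R ⧸ Wmod 𝒜 z (j + 1)) :=
        (Wmod 𝒜 z j).map (Wmod 𝒜 z (j + 1)).mkQ with hSdef
      haveI hartS : IsArtinian (evenSubring 𝒜) ↥S := by
        refine artinian_helper m hmax ?_ ?_
        · haveI : IsNoetherian (evenSubring 𝒜) (R ⧸ Wmod 𝒜 z (j + 1)) := inferInstance
          exact Module.Finite.iff_fg.mpr (IsNoetherian.noetherian S)
        · rintro c hc ⟨y, hy⟩
          obtain ⟨w, hw, rfl⟩ := hy
          refine Subtype.ext ?_
          show c • ((Wmod 𝒜 z (j + 1)).mkQ w) = 0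
          rw [← map_smul, Submodule.mkQ_apply, Submodule.Quotient.mk_eq_zero]
          exact hkill j c hc w hw
      haveI hartQ : IsArtinian (evenSubring 𝒜) (R ⧸ Wmod 𝒜 z j) := ih
      have hker : Wmod 𝒜 z (j + 1) ≤ LinearMap.ker (Wmod 𝒜 z j).mkQ := by
        rw [Submodule.ker_mkQ]; exact hle
      have hrange : LinearMap.range S.subtype
          = LinearMap.ker ((Wmod 𝒜 z (j + 1)).liftQ (Wmod 𝒜 z j).mkQ hker) := by
        rw [Submodule.range_subtype, Submodule.ker_liftQ, Submodule.ker_mkQ]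
      exact isArtinian_of_range_eq_ker S.subtype _ hrange
  haveI : IsArtinian (evenSubring 𝒜) (R ⧸ Wmod 𝒜 z (n + 1)) := hart (n + 1)
  haveI hartR : IsArtinian (evenSubring 𝒜) R :=
    isArtinian_of_linearEquiv (Submodule.quotEquivOfEqBot _ (Wtop 𝒜 hsc h2 hz))
  have hpartB : IsArtinianSuperring 𝒜 := by
    intro I _ _ hIdec
    have hant : Antitone I := antitone_nat_of_succ_le hIdec
    set C : ℕ →o (Submodule (evenSubring 𝒜) R)ᵒᵈ :=
      ⟨fun t => OrderDual.toDual (Submodule.restrictScalars (evenSubring 𝒜) (I t)),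
        fun a b hab x hx => hant hab hx⟩ with hC
    obtain ⟨N, hN⟩ := IsArtinian.monotone_stabilizes C
    refine ⟨N, fun mm hmm => ?_⟩
    have heq : Submodule.restrictScalars (evenSubring 𝒜) (I N)
        = Submodule.restrictScalars (evenSubring 𝒜) (I mm) := hN mm hmm
    exact (Submodule.restrictScalars_injective (evenSubring 𝒜) R R heq).symm
  exact ⟨hpartA, hpartB, hpartC⟩
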